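/- arXiv:1911.06735 — 2 statements merged into one kernel-verified Lean document; each statement's English description precedes it below -/
import Mathlib

section
/- Let p be an odd prime and λ a BG-partition. Then a*_λ, the number of nodes in the p-rim* of λ, is even if and only if p divides a*_λ. -/
namespace Mull

/-- A partition of a natural number, encoded as the (0-indexed) weakly decreasing,
eventually-zero sequence of its row lengths.  The Young diagram of `f` is the set
of (0-indexed) nodes `(i, j)` with `j < f i`. -/
def IsPartition (f : ℕ → ℕ) : Prop :=
  Antitone f ∧ ∃ N, f N = 0

/-- The number of nonzero rows of `f`. -/
noncomputable def len (f : ℕ → ℕ) : ℕ :=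
  sInf {N | f N = 0}

/-- The size (number of nodes) of `f`. -/
noncomputable def size (f : ℕ → ℕ) : ℕ :=
  ∑ i ∈ Finset.range (len f), f i

/-- The conjugate (transpose) partition: `conj f j` is the number of rows `i`
with `f i > j`, i.e. the length of the `j`-th column. -/
noncomputable def conj (f : ℕ → ℕ) : ℕ → ℕ :=
  fun j => Nat.card {i | j < f i}

/-- A partition is self-conjugate if it equals its conjugate. -/
def SelfConj (f : ℕ → ℕ) : Prop :=
  conj f = f

/-- The hook length of `f` at the (0-indexed) node `(i, j)`:
in 1-indexed terms this is `λ_i + λ'_j - i - j + 1`. -/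
noncomputable def hook (f : ℕ → ℕ) (i j : ℕ) : ℕ :=
  f i + conj f j - i - j - 1

/-- A BG-partition: a self-conjugate partition none of whose diagonal hook lengths
is divisible by `p`. -/
def IsBG (p : ℕ) (f : ℕ → ℕ) : Prop :=
  IsPartition f ∧ SelfConj f ∧ ∀ i, i < f i → ¬ p ∣ hook f i i

/-- A partition is `p`-regular if it does not have `p` equal nonzero parts. -/
def IsRegular (p : ℕ) (f : ℕ → ℕ) : Prop :=
  ∀ i, f (i + (p - 1)) ≠ 0 → f i ≠ f (i + (p - 1))

/-- The list of nodes of the rim of `f` (nodes `(i, j)` of the diagram such that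
`(i+1, j+1)` is not in the diagram), listed from the top right to the bottom left. -/
noncomputable def rimList (f : ℕ → ℕ) : List (ℕ × ℕ) :=
  (List.range (len f)).flatMap fun i =>
    (List.range (f i - (f (i + 1) - 1))).map fun k => (i, f i - 1 - k)

/-- Auxiliary selection of the `p`-rim from the ordered list of rim nodes (with fuel):
take the next `p`-segment (the next `p` rim nodes), then, if the last selected node is
not in the bottom row, skip the remaining rim nodes lying in the row of the last
selected node and continue from the next row. -/
def pRimAux (p : ℕ) : ℕ → List (ℕ × ℕ) → List (ℕ × ℕ)
  | 0, _ => []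
  | _ + 1, [] => []
  | fuel + 1, c :: L =>
    (c :: L).take p ++
      pRimAux p fuel (((c :: L).drop p).filter
        fun d => (((c :: L).take p).getLastD c).1 < d.1)

/-- The list of nodes of the `p`-rim of `f`, from the top right to the bottom left. -/
noncomputable def pRimList (p : ℕ) (f : ℕ → ℕ) : List (ℕ × ℕ) :=
  pRimAux p (rimList f).length (rimList f)

/-- `f` minus its `p`-rim. -/
noncomputable def removeRim (p : ℕ) (f : ℕ → ℕ) : ℕ → ℕ :=
  fun i => f i - ((pRimList p f).filter fun c => c.1 = i).length

/-- The number of columns of the Mullineux symbol of `f` (i.e. `l + 1`), namely the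
number of times the `p`-rim must be removed to reach the empty partition. -/
noncomputable def steps (p : ℕ) (f : ℕ → ℕ) : ℕ :=
  sInf {k | len ((removeRim p)^[k] f) = 0}

/-- `a_i`: the number of nodes of the `p`-rim of `λ^(i)`. -/
noncomputable def aSeq (p : ℕ) (f : ℕ → ℕ) (i : ℕ) : ℕ :=
  (pRimList p ((removeRim p)^[i] f)).length

/-- `r_i`: the number of nonzero rows of `λ^(i)`. -/
noncomputable def rSeq (p : ℕ) (f : ℕ → ℕ) (i : ℕ) : ℕ :=
  len ((removeRim p)^[i] f)

/-- `ε_i`: `0` if `p ∣ a_i` and `1` otherwise. -/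
noncomputable def epsSeq (p : ℕ) (f : ℕ → ℕ) (i : ℕ) : ℕ :=
  if p ∣ aSeq p f i then 0 else 1

/-- The Mullineux symbol of `f`, recorded as the list of its columns
`(a_i, r_i)` for `0 ≤ i ≤ l`. -/
noncomputable def GSymb (p : ℕ) (f : ℕ → ℕ) : List (ℕ × ℕ) :=
  (List.range (steps p f)).map fun i => (aSeq p f i, rSeq p f i)

/-- The effect of the Mullineux map on one column of the Mullineux symbol:
`(a_i, r_i) ↦ (a_i, s_i)` where `s_i = a_i + ε_i - r_i`. -/
def mullCol (p : ℕ) (c : ℕ × ℕ) : ℕ × ℕ :=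
  (c.1, c.1 + (if p ∣ c.1 then 0 else 1) - c.2)

/-- `f` is a self-Mullineux partition: a `p`-regular partition fixed by the Mullineux
map, i.e. every column of its Mullineux symbol is fixed by `mullCol`. -/
def SelfMull (p : ℕ) (f : ℕ → ℕ) : Prop :=
  IsPartition f ∧ IsRegular p f ∧ (GSymb p f).map (mullCol p) = GSymb p f

/-- `U_λ`: the nodes of the `p`-rim lying on or above the diagonal. -/
noncomputable def UList (p : ℕ) (f : ℕ → ℕ) : List (ℕ × ℕ) :=
  (pRimList p f).filter fun c => c.1 ≤ c.2

/-- The `p`-rim* of a self-conjugate partition: `U_λ ∪ L_λ`, where `L_λ` is the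
reflection of `U_λ` across the diagonal. -/
noncomputable def rimStar (p : ℕ) (f : ℕ → ℕ) : Finset (ℕ × ℕ) :=
  (UList p f).toFinset ∪ (UList p f).toFinset.image fun c => (c.2, c.1)

/-- `a*`: the number of nodes of the `p`-rim*. -/
noncomputable def aStar (p : ℕ) (f : ℕ → ℕ) : ℕ :=
  (rimStar p f).card

/-- `r*`: the number of nodes of `U_λ`. -/
noncomputable def rStar (p : ℕ) (f : ℕ → ℕ) : ℕ :=
  (UList p f).toFinset.card

/-- `ε* = a* mod 2`. -/
noncomputable def epsStar (p : ℕ) (f : ℕ → ℕ) : ℕ :=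
  aStar p f % 2

/-- `λ^(1)*`: `f` minus its `p`-rim*. -/
noncomputable def removeRimStar (p : ℕ) (f : ℕ → ℕ) : ℕ → ℕ :=
  fun i => f i - ((rimStar p f).filter fun c => c.1 = i).card

/-- The number of columns of the BG-symbol of `f`. -/
noncomputable def stepsStar (p : ℕ) (f : ℕ → ℕ) : ℕ :=
  sInf {k | len ((removeRimStar p)^[k] f) = 0}

/-- The BG-symbol of a self-conjugate partition, recorded as the list of its columns
`(a*_i, r*_i)` for `0 ≤ i ≤ l`. -/
noncomputable def BGSymb (p : ℕ) (f : ℕ → ℕ) : List (ℕ × ℕ) :=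
  (List.range (stepsStar p f)).map fun i =>
    (aStar p ((removeRimStar p)^[i] f), rStar p ((removeRimStar p)^[i] f))

/-- The number of diagonal nodes of `f`, i.e. `max {i : λ_i ≥ i}` in 1-indexed terms. -/
noncomputable def kDiag (f : ℕ → ℕ) : ℕ :=
  Nat.card {i | i < f i}

/-- The sequence of diagonal hook lengths of `f` (padded with zeros). -/
noncomputable def diagHooks (f : ℕ → ℕ) : ℕ → ℕ :=
  fun i => if i < f i then hook f i i else 0


section AuxProof

open List

private def nkey (c : ℕ × ℕ) : ℤ := (c.1 : ℤ) - (c.2 : ℤ)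

private def Pd : ℕ × ℕ → Bool := fun c => decide (c.1 ≤ c.2)

private noncomputable def blk (f : ℕ → ℕ) (i : ℕ) : List (ℕ × ℕ) :=
  (List.range (f i - (f (i + 1) - 1))).map fun k => (i, f i - 1 - k)

private noncomputable def part (f : ℕ → ℕ) (N : ℕ) : List (ℕ × ℕ) :=
  (List.range N).flatMap (blk f)

private lemma rimList_eq_part (f : ℕ → ℕ) : rimList f = part f (len f) := rfl

private lemma part_succ (f : ℕ → ℕ) (N : ℕ) : part f (N + 1) = part f N ++ blk f N := by
  simp [part, range_succ, flatMap_append]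

private lemma mem_blk {f : ℕ → ℕ} {c : ℕ × ℕ} {i : ℕ} (h : c ∈ blk f i) :
    c.1 = i ∧ c.2 < f i := by
  simp only [blk, mem_map, mem_range] at h
  obtain ⟨k, hk, rfl⟩ := h
  exact ⟨rfl, by omega⟩

private lemma mem_part {f : ℕ → ℕ} {c : ℕ × ℕ} {N : ℕ} (h : c ∈ part f N) :
    c.1 < N ∧ c.2 < f c.1 := by
  simp only [part, mem_flatMap, mem_range] at h
  obtain ⟨i, hi, hc⟩ := h
  obtain ⟨h1, h2⟩ := mem_blk hc
  exact ⟨by omega, by rwa [h1]⟩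

private lemma part_rows (f : ℕ → ℕ) (N : ℕ) :
    List.Pairwise (fun a b : ℕ × ℕ => a.1 ≤ b.1) (part f N) := by
  induction N with
  | zero => simp [part]
  | succ N ih =>
    rw [part_succ, pairwise_append]
    refine ⟨ih, ?_, ?_⟩
    · refine List.pairwise_of_forall_mem_list ?_
      intro a ha b hb
      rw [(mem_blk ha).1, (mem_blk hb).1]
    · intro a ha b hb
      have := (mem_part ha).1
      rw [(mem_blk hb).1]
      omega

private lemma count_range_le (a : ℤ) (n : ℕ) :
    (List.range n).countP (fun k : ℕ => decide (a + (k : ℤ) ≤ 0)) = min n (1 - a).toNat := by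
  induction n with
  | zero => simp
  | succ n ih =>
    rw [range_succ, countP_append, ih]
    by_cases h : a + (n : ℤ) ≤ 0 <;> simp [h] <;> omega

private lemma blk_key (f : ℕ → ℕ) {i : ℕ} (hi : 0 < f i) :
    (blk f i).map nkey
      = (List.range (blk f i).length).map (fun k : ℕ => ((i : ℤ) - (f i : ℤ) + 1) + (k : ℤ)) := by
  unfold blk
  rw [map_map, length_map, length_range]
  refine List.map_congr_left ?_
  intro k hk
  rw [mem_range] at hk
  simp only [Function.comp, nkey]
  have hk2 : k < f i := by omega
  push_cast [Nat.sub_sub, Nat.cast_sub (by omega : 1 + k ≤ f i)]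
  ring

private lemma part_key (f : ℕ → ℕ) (hA : Antitone f) (hlen : f (len f) = 0)
    (hpos : ∀ i, i < len f → 0 < f i) (hf0 : f 0 = len f) :
    ∀ N, N ≤ len f →
      (part f N).map nkey
          = (List.range (part f N).length).map (fun k : ℕ => 1 - (len f : ℤ) + (k : ℤ)) ∧
        (N < len f → ((part f N).length : ℤ) = (N : ℤ) - (f N : ℤ) + (len f : ℤ)) := by
  intro N
  induction N with
  | zero =>
    intro _
    refine ⟨by simp [part], ?_⟩
    intro h
    simp only [part, range_zero, flatMap_nil, length_nil]
    push_cast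
    omega
  | succ N ih =>
    intro hN
    have hNlt : N < len f := by omega
    obtain ⟨ih1, ih2⟩ := ih (le_of_lt hNlt)
    have hlp := ih2 hNlt
    have hfN : 0 < f N := hpos N hNlt
    have hbk := blk_key f hfN
    have hbl : (blk f N).length = f N - (f (N + 1) - 1) := by simp [blk]
    constructor
    · rw [part_succ, map_append, ih1, hbk, length_append, range_add, map_append, map_map]
      congr 1
      refine (List.map_congr_left ?_).symm
      intro k _
      simp only [Function.comp]
      push_cast
      omega
    · intro hN1
      have hfN1 : 0 < f (N + 1) := hpos _ hN1
      have hble : f (N + 1) ≤ f N := hA (Nat.le_succ N)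
      rw [part_succ, length_append]
      push_cast [hbl]
      omega

private lemma rim_key (f : ℕ → ℕ) (hA : Antitone f) (h0 : 0 < len f) (hlen : f (len f) = 0)
    (hpos : ∀ i, i < len f → 0 < f i) (hf0 : f 0 = len f) :
    (part f (len f)).map nkey
        = (List.range (part f (len f)).length).map (fun k : ℕ => 1 - (len f : ℤ) + (k : ℤ)) ∧
      (part f (len f)).length = 2 * len f - 1 := by
  refine ⟨(part_key f hA hlen hpos hf0 (len f) le_rfl).1, ?_⟩
  obtain ⟨K, hK⟩ : ∃ K, len f = K + 1 := ⟨len f - 1, by omega⟩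
  have hKlt : K < len f := by omega
  have h2 := (part_key f hA hlen hpos hf0 K (by omega)).2 hKlt
  have hbl : (blk f K).length = f K - (f (K + 1) - 1) := by simp [blk]
  have hfK : 0 < f K := hpos K hKlt
  have hfK1 : f (K + 1) = 0 := by rw [← hK]; exact hlen
  have hfKle : f K ≤ f 0 := hA (Nat.zero_le K)
  rw [hK, part_succ, length_append]
  rw [hK] at h2
  push_cast at h2
  omega

private lemma pRimAux_nil (p fuel : ℕ) : pRimAux p fuel [] = [] := by
  cases fuel <;> rfl

private lemma pRimAux_cons (p fuel : ℕ) (c : ℕ × ℕ) (l : List (ℕ × ℕ)) :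
    pRimAux p (fuel + 1) (c :: l) =
      (c :: l).take p ++
        pRimAux p fuel (((c :: l).drop p).filter
          fun d => decide ((((c :: l).take p).getLastD c).1 < d.1)) := rfl

private lemma pRimAux_sublist (p : ℕ) : ∀ fuel M, pRimAux p fuel M <+ M := by
  intro fuel
  induction fuel with
  | zero => intro M; simp [pRimAux]
  | succ n ih =>
    intro M
    cases M with
    | nil => simp [pRimAux]
    | cons c l =>
      rw [pRimAux_cons]
      calc (c :: l).take p ++ pRimAux p n (((c :: l).drop p).filter
              fun d => decide ((((c :: l).take p).getLastD c).1 < d.1))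
          <+ (c :: l).take p ++ (c :: l).drop p :=
            List.Sublist.append (Sublist.refl _) ((ih _).trans (filter_sublist))
        _ = c :: l := take_append_drop _ _

private lemma blk_head {f : ℕ → ℕ} {i : ℕ} (hi : 0 < f i) (hle : f (i + 1) ≤ f i) :
    (blk f i).head? = some (i, f i - 1) := by
  obtain ⟨c, hc⟩ : ∃ c, f i - (f (i + 1) - 1) = c + 1 :=
    ⟨f i - (f (i + 1) - 1) - 1, by omega⟩
  rw [blk, hc, List.range_succ_eq_map, map_cons]
  simp

private lemma filter_row (f : ℕ → ℕ) (hA : Antitone f) (hpos : ∀ i, i < len f → 0 < f i)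
    (q : ℕ) (hq : q + 1 < len f) :
    ∃ t', (part f (len f)).filter (fun b => decide (q < b.1)) = (part f (len f)).drop t' ∧
      ((part f (len f)).filter (fun b => decide (q < b.1))).head? = some (q + 1, f (q + 1) - 1) := by
  obtain ⟨n2, hn2⟩ : ∃ n2, len f = q + 1 + n2 := ⟨len f - (q + 1), by omega⟩
  have hsplit : part f (len f)
      = part f (q + 1) ++ ((List.range n2).map (fun x => q + 1 + x)).flatMap (blk f) := by
    rw [part, hn2, range_add, flatMap_append]
    rfl
  set S := ((List.range n2).map (fun x => q + 1 + x)).flatMap (blk f) with hS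
  have hrowS : ∀ b ∈ S, q < b.1 := by
    intro b hb
    rw [hS, mem_flatMap] at hb
    obtain ⟨i, hi, hb⟩ := hb
    rw [mem_map] at hi
    obtain ⟨x, _, rfl⟩ := hi
    rw [(mem_blk hb).1]
    omega
  have hf1 : (part f (q + 1)).filter (fun b => decide (q < b.1)) = [] := by
    rw [filter_eq_nil_iff]
    intro b hb
    have := (mem_part hb).1
    simp only [decide_eq_true_eq]
    omega
  have hf2 : S.filter (fun b => decide (q < b.1)) = S := by
    rw [filter_eq_self]
    intro b hb
    simpa using hrowS b hb
  have hfilter : (part f (len f)).filter (fun b => decide (q < b.1)) = S := by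
    rw [hsplit, filter_append, hf1, hf2, nil_append]
  refine ⟨(part f (q + 1)).length, ?_, ?_⟩
  · rw [hfilter, hsplit, drop_left]
  · rw [hfilter, hS]
    obtain ⟨k, hk⟩ : ∃ k, n2 = k + 1 := ⟨n2 - 1, by omega⟩
    rw [hk, List.range_succ_eq_map, map_cons, flatMap_cons]
    rw [head?_append]
    rw [blk_head (hpos (q + 1) hq) (hA (by omega : q + 1 ≤ q + 1 + 1))]
    simp

end AuxProof

set_option maxHeartbeats 4000000 in
/-- Lemma: for a BG-partition `λ`, the number `a*_λ` of nodes of the `p`-rim* is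
even if and only if `p` divides `a*_λ`. -/
theorem even_aStar_iff_dvd (p : ℕ) (hp : p.Prime) (hodd : Odd p)
    (f : ℕ → ℕ) (hf : IsBG p f) :
    Even (aStar p f) ↔ p ∣ aStar p f := by
  classical
  obtain ⟨⟨hA, hN⟩, hSC, hBG⟩ := hf
  by_cases hz : len f = 0
  · have hR : rimList f = [] := by
      rw [rimList, hz]
      rfl
    have hPR : pRimList p f = [] := by
      rw [pRimList, hR]
      rfl
    simp [aStar, rimStar, UList, hPR]
  have h0 : 0 < len f := Nat.pos_of_ne_zero hz
  have hp1 : 0 < p := hp.pos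
  have hlen0 : f (len f) = 0 := Nat.sInf_mem hN
  have hpos : ∀ i, i < len f → 0 < f i := by
    intro i hi
    have h1 : i ∉ {N | f N = 0} := Nat.notMem_of_lt_sInf hi
    have h2 : f i ≠ 0 := h1
    omega
  have hf0 : f 0 = len f := by
    have h1 : conj f 0 = f 0 := congrFun hSC 0
    have h2 : {i | 0 < f i} = Set.Iio (len f) := by
      ext i
      simp only [Set.mem_setOf_eq, Set.mem_Iio]
      constructor
      · intro hfi
        by_contra hcon
        have := hA (le_of_not_gt hcon : len f ≤ i)
        omega
      · exact hpos i
    rw [← h1, conj, h2]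
    simp [Nat.card_eq_fintype_card]
  obtain ⟨hkey, hL⟩ := rim_key f hA h0 hlen0 hpos hf0
  rw [← rimList_eq_part] at hkey hL
  have hKG : ∀ n (hn : n < (rimList f).length), nkey ((rimList f)[n]'hn) = 1 - (len f : ℤ) + n := by
    intro n hn
    have h1 := List.getElem_of_eq hkey (by simpa using hn)
    simpa using h1
  have hNodup : (rimList f).Nodup := by
    have h1 : ((rimList f).map nkey).Nodup := by
      rw [hkey]
      refine List.Nodup.map ?_ (List.nodup_range)
      intro a b hab
      simp only at hab
      omega
    exact h1.of_map
  have hMEM : ∀ c ∈ rimList f, c.1 < len f ∧ c.2 < f c.1 := by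
    intro c hc
    exact mem_part (by rwa [← rimList_eq_part])
  have hROW : ∀ (n₁ n₂ : ℕ) (h1 : n₁ < (rimList f).length) (h2 : n₂ < (rimList f).length),
      n₁ ≤ n₂ → ((rimList f)[n₁]'h1).1 ≤ ((rimList f)[n₂]'h2).1 := by
    have hPW : List.Pairwise (fun a b : ℕ × ℕ => a.1 ≤ b.1) (rimList f) := by
      rw [rimList_eq_part]
      exact part_rows f (len f)
    intro n₁ n₂ h1 h2 hle
    rcases Nat.lt_or_ge n₁ n₂ with h | h
    · exact List.pairwise_iff_getElem.mp hPW n₁ n₂ h1 h2 h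
    · have : n₁ = n₂ := by omega
      subst this
      exact le_rfl
  have hm : len f - 1 < (rimList f).length := by omega
  obtain ⟨dd, hdddef⟩ : ∃ dd, dd = (rimList f)[len f - 1]'hm := ⟨_, rfl⟩
  have hdd : dd.1 = dd.2 := by
    have h1 := hKG (len f - 1) hm
    rw [← hdddef] at h1
    unfold nkey at h1
    omega
  have hddR : dd ∈ rimList f := by
    rw [hdddef]
    exact List.getElem_mem hm
  have hfd : dd.1 < f dd.1 := by
    have := (hMEM dd hddR).2
    omega
  have huniq : ∀ x ∈ rimList f, x.1 = x.2 → x = dd := by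
    intro x hx he
    obtain ⟨j, hj, rfl⟩ := List.mem_iff_getElem.mp hx
    have h1 := hKG j hj
    unfold nkey at h1
    have hj' : j = len f - 1 := by omega
    subst hj'
    rw [hdddef]
  have hCNT : ∀ n, List.countP Pd ((rimList f).take n) = min (min n (rimList f).length) (len f) := by
    intro n
    have e1 : List.countP Pd ((rimList f).take n)
        = List.countP (fun z : ℤ => decide (z ≤ 0)) (((rimList f).map nkey).take n) := by
      rw [← List.map_take, List.countP_map]
      refine (List.countP_congr ?_).symm
      intro x hx
      simp only [Function.comp, Pd, nkey, decide_eq_true_eq]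
      exact ⟨fun h => by have := of_decide_eq_true h; omega, fun h => decide_eq_true (by omega)⟩
    rw [e1, hkey, ← List.map_take, List.take_range, List.countP_map]
    have e2 : List.countP ((fun z : ℤ => decide (z ≤ 0)) ∘ fun k : ℕ => 1 - (len f : ℤ) + (k : ℤ))
          (List.range (min n (rimList f).length))
        = List.countP (fun k : ℕ => decide ((1 - (len f : ℤ)) + (k : ℤ) ≤ 0))
          (List.range (min n (rimList f).length)) := by
      refine List.countP_congr ?_
      intro x hx
      simp [Function.comp]
    rw [e2, count_range_le]
    have e3 : (1 - (1 - (len f : ℤ))).toNat = len f := by omega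
    rw [e3]
  have hCR : List.countP Pd (rimList f) = len f := by
    have h1 := hCNT (rimList f).length
    rwa [List.take_length, min_self, min_eq_right (by omega)] at h1
  have hCT : ∀ t n, List.countP Pd (((rimList f).drop t).take n)
      = min (min (t + n) (rimList f).length) (len f) - min (min t (rimList f).length) (len f) := by
    intro t n
    have e : List.countP Pd ((rimList f).take t ++ ((rimList f).drop t).take n) = _ := List.countP_append
    rw [← List.take_add, hCNT, hCNT] at e
    omega
  have hCD : ∀ t, List.countP Pd ((rimList f).drop t)
      = len f - min (min t (rimList f).length) (len f) := by
    intro t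
    have e : List.countP Pd ((rimList f).take t ++ (rimList f).drop t) = _ := List.countP_append
    rw [List.take_append_drop, hCR, hCNT] at e
    omega
  have aux : ∀ fuel t (M : List (ℕ × ℕ)), M = (rimList f).drop t →
      (∀ c, M.head? = some c → c.2 = f c.1 - 1) → M.length ≤ fuel →
      (∃ r, r < f r ∧ (List.countP Pd (pRimAux p fuel M)) % p = (f r - r) % p ∧
          dd ∈ pRimAux p fuel M)
        ∨ (p ∣ List.countP Pd (pRimAux p fuel M) ∧ dd ∉ pRimAux p fuel M) := by
    intro fuel
    induction fuel with
    | zero =>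
      intro t M hM hh hlenM
      have h1 : pRimAux p 0 M = [] := rfl
      rw [h1]
      exact Or.inr ⟨by simp, by simp⟩
    | succ n ih =>
      intro t M hM hh hlenM
      cases M with
      | nil =>
        rw [pRimAux_nil]
        exact Or.inr ⟨by simp, by simp⟩
      | cons c tl =>
        rw [pRimAux_cons]
        set seg := (c :: tl).take p with hseg
        set Mdrop := (c :: tl).drop p with hMdrop
        set q := (seg.getLastD c).1 with hq
        set rest := Mdrop.filter (fun d => decide (q < d.1)) with hrest
        set rec := pRimAux p n rest with hrec
        have hlM : (c :: tl).length = (rimList f).length - t := by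
          rw [hM, List.length_drop]
        have hlMpos : 0 < (c :: tl).length := by simp
        have htL : t < (rimList f).length := by omega
        have hcget : c = (rimList f)[t]'htL := by
          have h1 : (rimList f)[t]? = some c := by
            rw [← List.head?_drop, ← hM]
            rfl
          rw [List.getElem?_eq_getElem htL] at h1
          exact (Option.some_inj.mp h1).symm
        have hhc : c.2 = f c.1 - 1 := hh c rfl
        have hcR : c ∈ rimList f := by
          rw [hcget]
          exact List.getElem_mem htL
        have hfr : 0 < f c.1 := by
          have := (hMEM c hcR).2
          omega
        have htval : (t : ℤ) = (c.1 : ℤ) - f c.1 + len f := by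
          have h2 := hKG t htL
          rw [← hcget] at h2
          unfold nkey at h2
          rw [hhc] at h2
          omega
        have hsegcnt : List.countP Pd seg
            = min (min (t + p) (rimList f).length) (len f) - min (min t (rimList f).length) (len f) := by
          rw [hseg, hM]
          exact hCT t p
        have hdropR : Mdrop = (rimList f).drop (t + p) := by
          rw [hMdrop, hM, List.drop_drop]
        have hrestsubd : rest.Sublist ((rimList f).drop (t + p)) := by
          have h1 : rest.Sublist Mdrop := by
            rw [hrest]
            exact List.filter_sublist
          rwa [hdropR] at h1
        have hrecsub : rec.Sublist ((rimList f).drop (t + p)) := by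
          rw [hrec]
          exact (pRimAux_sublist p n rest).trans hrestsubd
        have hsub : (seg ++ rec).Sublist (c :: tl) := by
          have h1 : (seg ++ rec).Sublist (seg ++ Mdrop) := by
            refine List.Sublist.append (List.Sublist.refl _) ?_
            rw [hrec]
            exact (pRimAux_sublist p n rest).trans
              (by rw [hrest]; exact List.filter_sublist)
          have h2 : seg ++ Mdrop = c :: tl := by
            rw [hseg, hMdrop]
            exact List.take_append_drop _ _
          rwa [h2] at h1
        have hddnotseg : t + p ≤ len f - 1 → dd ∉ seg := by
          intro hlt hin
          rw [hseg, hM] at hin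
          obtain ⟨j, hj, hjeq⟩ := List.mem_iff_getElem.mp hin
          rw [List.length_take, List.length_drop] at hj
          rw [List.getElem_take, List.getElem_drop] at hjeq
          have h2 := hNodup.getElem_inj_iff.mp (hjeq.trans hdddef)
          omega
        rcases Nat.lt_or_ge (len f - 1) t with hB | hA1
        · right
          have hM0 : List.countP Pd (c :: tl) = 0 := by
            rw [hM, hCD]
            omega
          have h1 : List.countP Pd (seg ++ rec) = 0 := by
            have := List.Sublist.countP_le (p := Pd) hsub
            omega
          refine ⟨h1 ▸ dvd_zero p, ?_⟩
          intro hmemdd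
          have h2 : dd ∈ c :: tl := hsub.subset hmemdd
          rw [hM] at h2
          obtain ⟨j, hj, hjeq⟩ := List.mem_iff_getElem.mp h2
          rw [List.length_drop] at hj
          rw [List.getElem_drop] at hjeq
          have h3 := hNodup.getElem_inj_iff.mp (hjeq.trans hdddef)
          omega
        rcases Nat.lt_or_ge (len f - 1) (t + p) with hA2 | hC
        · left
          have hrd : c.1 ≤ dd.1 := by
            rw [hcget, hdddef]
            exact hROW t (len f - 1) htL hm (by omega)
          have hrf : c.1 < f c.1 := by
            have h1 : f dd.1 ≤ f c.1 := hA hrd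
            omega
          refine ⟨c.1, hrf, ?_, ?_⟩
          · have hrec0 : List.countP Pd rec = 0 := by
              have h1 := List.Sublist.countP_le (p := Pd) hrecsub
              rw [hCD] at h1
              omega
            have hval : List.countP Pd (seg ++ rec) = f c.1 - c.1 := by
              rw [List.countP_append, hrec0, hsegcnt]
              omega
            rw [hval]
          · refine List.mem_append_left _ ?_
            rw [hseg, hM]
            have hjlen : len f - 1 - t < (((rimList f).drop t).take p).length := by
              rw [List.length_take, List.length_drop]
              omega
            have h5 : (((rimList f).drop t).take p)[len f - 1 - t]'hjlen = dd := by
              rw [List.getElem_take, List.getElem_drop, hdddef]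
              congr 1
              omega
            rw [← h5]
            exact List.getElem_mem hjlen
        · have hplen : p ≤ (c :: tl).length := by omega
          have hseglen : seg.length = p := by
            rw [hseg, List.length_take]
            omega
          have htp1 : t + p - 1 < (rimList f).length := by omega
          have hlast : seg.getLastD c = (rimList f)[t + p - 1]'htp1 := by
            have hsegeq : seg = ((rimList f).drop t).take p := by rw [hseg, hM]
            rw [hsegeq]
            rw [List.getLastD_eq_getLast?, List.getLast?_eq_getElem?]
            have hlen9 : (((rimList f).drop t).take p).length = p := by
              rw [List.length_take, List.length_drop]
              omega
            rw [hlen9, List.getElem?_eq_getElem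
              (by rw [List.length_take, List.length_drop]; omega :
                p - 1 < (((rimList f).drop t).take p).length)]
            simp only [Option.getD_some]
            rw [List.getElem_take, List.getElem_drop]
            congr 1
            omega
          have hqval : q = ((rimList f)[t + p - 1]'htp1).1 := by rw [hq, hlast]
          have hqlt : q < len f := by
            rw [hqval]
            exact (hMEM _ (List.getElem_mem _)).1
          have hprefix : ∀ x ∈ (rimList f).take (t + p), x.1 ≤ q := by
            intro x hx
            obtain ⟨j, hj, hjeq⟩ := List.mem_iff_getElem.mp hx
            rw [List.length_take] at hj
            rw [List.getElem_take] at hjeq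
            rw [hqval, ← hjeq]
            exact hROW j (t + p - 1) (by omega) htp1 (by omega)
          have hrestfil : rest = (rimList f).filter (fun b => decide (q < b.1)) := by
            rw [hrest, hdropR]
            conv_rhs => rw [← List.take_append_drop (t + p) (rimList f)]
            rw [List.filter_append]
            have h1 : ((rimList f).take (t + p)).filter (fun b => decide (q < b.1)) = [] := by
              rw [List.filter_eq_nil_iff]
              intro b hb
              have := hprefix b hb
              simp only [decide_eq_true_eq]
              omega
            rw [h1, List.nil_append]
          have hsegp : List.countP Pd seg = p := by
            rw [hsegcnt]
            omega
          rcases Nat.lt_or_ge q (len f - 1) with hq2 | hq3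
          · obtain ⟨t', ht', hhd⟩ := filter_row f hA hpos q (by omega)
            rw [← rimList_eq_part] at ht' hhd
            have hrestR : rest = (rimList f).drop t' := by rw [hrestfil, ht']
            have hheadrest : ∀ c', rest.head? = some c' → c'.2 = f c'.1 - 1 := by
              intro c' hc'
              rw [hrestfil, hhd] at hc'
              obtain rfl : (q + 1, f (q + 1) - 1) = c' := Option.some_inj.mp hc'
              rfl
            have hrestlen : rest.length ≤ n := by
              have h1 : rest.length ≤ Mdrop.length := by
                rw [hrest]
                exact (List.filter_sublist).length_le
              rw [hMdrop, List.length_drop] at h1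
              simp only [List.length_cons] at hlenM h1 hplen
              omega
            rcases ih t' rest hrestR hheadrest hrestlen with ⟨r', h1, h2, h3⟩ | ⟨h1, h2⟩
            · left
              refine ⟨r', h1, ?_, List.mem_append_right _ h3⟩
              rw [List.countP_append, hsegp, Nat.add_mod_left]
              exact h2
            · right
              constructor
              · rw [List.countP_append, hsegp]
                exact Nat.dvd_add (dvd_refl p) h1
              · intro hmem
                rcases List.mem_append.mp hmem with hin | hin
                · exact hddnotseg (by omega) hin
                · exact h2 hin
          · have hrnil : rest = [] := by
              rw [hrestfil, List.filter_eq_nil_iff]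
              intro b hb
              have := (hMEM b hb).1
              simp only [decide_eq_true_eq]
              omega
            have hrecnil : rec = [] := by rw [hrec, hrnil, pRimAux_nil]
            right
            constructor
            · rw [hrecnil, List.append_nil, hsegp]
            · rw [hrecnil, List.append_nil]
              exact hddnotseg (by omega)
  have hhead0 : ∀ c, (rimList f).head? = some c → c.2 = f c.1 - 1 := by
    intro c hc
    have h00 : 0 < (rimList f).length := by omega
    rw [List.head?_eq_getElem?, List.getElem?_eq_getElem h00] at hc
    obtain rfl : (rimList f)[0]'h00 = c := Option.some_inj.mp hc
    have hk0 := hKG 0 h00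
    unfold nkey at hk0
    have hmem := hMEM _ (List.getElem_mem h00)
    have hle : f ((rimList f)[0]'h00).1 ≤ f 0 := hA (Nat.zero_le _)
    have hc1 : ((rimList f)[0]'h00).1 = 0 := by omega
    rw [hc1]
    omega
  have hfin := aux (rimList f).length 0 (rimList f) (by rw [List.drop_zero]) hhead0 le_rfl
  have hPRdef : pRimList p f = pRimAux p (rimList f).length (rimList f) := rfl
  have hUL : UList p f = (pRimAux p (rimList f).length (rimList f)).filter Pd := by
    rw [UList, hPRdef]
    rfl
  have hsubout : (pRimAux p (rimList f).length (rimList f)).Sublist (rimList f) :=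
    pRimAux_sublist p (rimList f).length (rimList f)
  have hnodout : (UList p f).Nodup := by
    rw [hUL]
    exact List.Nodup.filter _ (hsubout.nodup hNodup)
  have hUcard : (UList p f).toFinset.card
      = List.countP Pd (pRimAux p (rimList f).length (rimList f)) := by
    rw [List.toFinset_card_of_nodup hnodout, hUL, ← List.countP_eq_length_filter]
  have hswapinj : Function.Injective (fun c : ℕ × ℕ => (c.2, c.1)) := by
    intro a b hab
    exact Prod.ext (congrArg Prod.snd hab) (congrArg Prod.fst hab)
  have hastar : aStar p f
      = ((UList p f).toFinset ∪ (UList p f).toFinset.image (fun c => (c.2, c.1))).card := rfl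
  have hmemT : ∀ x, x ∈ (UList p f).toFinset
      ↔ x ∈ pRimAux p (rimList f).length (rimList f) ∧ x.1 ≤ x.2 := by
    intro x
    rw [List.mem_toFinset, hUL, List.mem_filter]
    simp [Pd]
  have hinter : ∀ x ∈ (UList p f).toFinset ∩ (UList p f).toFinset.image (fun c => (c.2, c.1)),
      x = dd := by
    intro x hx
    rw [Finset.mem_inter] at hx
    obtain ⟨hx1, hx2⟩ := hx
    rw [Finset.mem_image] at hx2
    obtain ⟨y, hy, hyx⟩ := hx2
    have h1 := ((hmemT x).mp hx1).2
    have h2 := ((hmemT y).mp hy).2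
    have h3 := ((hmemT x).mp hx1).1
    refine huniq x (hsubout.subset h3) ?_
    have h4 : x = (y.2, y.1) := hyx.symm
    rw [h4] at h1 ⊢
    simp only at h1 ⊢
    omega
  have hcu := Finset.card_union_add_card_inter (UList p f).toFinset
    ((UList p f).toFinset.image (fun c : ℕ × ℕ => (c.2, c.1)))
  rw [Finset.card_image_of_injective _ hswapinj, hUcard] at hcu
  rcases hfin with ⟨r, hrf2, hmod, hddin⟩ | ⟨hdvd, hddnot⟩
  · obtain ⟨u, hu⟩ : ∃ u, List.countP Pd (pRimAux p (rimList f).length (rimList f)) = u :=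
      ⟨_, rfl⟩
    rw [hu] at hmod hcu
    have hddT : dd ∈ (UList p f).toFinset := (hmemT dd).mpr ⟨hddin, le_of_eq hdd⟩
    have hddimg : dd ∈ (UList p f).toFinset.image (fun c : ℕ × ℕ => (c.2, c.1)) := by
      rw [Finset.mem_image]
      exact ⟨dd, hddT, Prod.ext hdd.symm hdd⟩
    have hintercard : ((UList p f).toFinset ∩ (UList p f).toFinset.image
        (fun c : ℕ × ℕ => (c.2, c.1))).card = 1 := by
      have hss : (UList p f).toFinset ∩ (UList p f).toFinset.image
          (fun c : ℕ × ℕ => (c.2, c.1)) = {dd} :=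
        Finset.eq_singleton_iff_unique_mem.mpr
          ⟨Finset.mem_inter.mpr ⟨hddT, hddimg⟩, fun x hx => hinter x hx⟩
      rw [hss, Finset.card_singleton]
    rw [hintercard] at hcu
    have hu1 : 1 ≤ u := by
      rw [← hu]
      refine List.countP_pos_iff.mpr ⟨dd, hddin, ?_⟩
      simp only [Pd, decide_eq_true_eq]
      exact le_of_eq hdd
    have hacard : aStar p f = 2 * u - 1 := by
      rw [hastar]
      omega
    rw [hacard]
    have hv1 : 1 ≤ f r - r := by omega
    constructor
    · intro he
      exfalso
      obtain ⟨k, hk⟩ := he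
      omega
    · intro hdvd1
      exfalso
      have hhook : hook f r r = 2 * (f r - r) - 1 := by
        rw [hook]
        have hcj : conj f r = f r := congrFun hSC r
        rw [hcj]
        omega
      apply hBG r hrf2
      rw [hhook]
      have hmz : (p : ℤ) ∣ ((f r - r : ℕ) : ℤ) - (u : ℤ) := Nat.modEq_iff_dvd.mp hmod
      have h2u : (p : ℤ) ∣ 2 * (u : ℤ) - 1 := by
        have h5 := Int.natCast_dvd_natCast.mpr hdvd1
        have hcast : ((2 * u - 1 : ℕ) : ℤ) = 2 * (u : ℤ) - 1 := by omega
        rwa [hcast] at h5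
      have h2v : (p : ℤ) ∣ ((2 * (f r - r) - 1 : ℕ) : ℤ) := by
        have he : ((2 * (f r - r) - 1 : ℕ) : ℤ)
            = 2 * (((f r - r : ℕ) : ℤ) - (u : ℤ)) + (2 * (u : ℤ) - 1) := by omega
        rw [he]
        exact dvd_add (Dvd.dvd.mul_left hmz 2) h2u
      exact_mod_cast h2v
  · obtain ⟨u, hu⟩ : ∃ u, List.countP Pd (pRimAux p (rimList f).length (rimList f)) = u :=
      ⟨_, rfl⟩
    rw [hu] at hdvd hcu
    have hinterempty : (UList p f).toFinset ∩ (UList p f).toFinset.image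
        (fun c : ℕ × ℕ => (c.2, c.1)) = ∅ := by
      rw [Finset.eq_empty_iff_forall_notMem]
      intro x hx
      have hxdd := hinter x hx
      subst hxdd
      exact hddnot ((hmemT x).mp (Finset.mem_inter.mp hx).1).1
    rw [hinterempty, Finset.card_empty] at hcu
    have hacard : aStar p f = 2 * u := by
      rw [hastar]
      omega
    rw [hacard]
    constructor
    · intro _
      exact Dvd.dvd.mul_left hdvd 2
    · intro _
      exact ⟨u, by ring⟩

end Mull
end

section
/- Let p be an odd prime and λ a self-conjugate partition whose p-rim* is all of [λ] (equivalently, whose BG-symbol has a single column (a*_0, r*_0)). Then λ is the self-conjugate hook (r*_0, 1^{r*_0 − 1}); in particular a*_0 = 2 r*_0 − 1 is odd. -/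
namespace Mull

/-!
The corner `(0, 0)` lies in the `p`-rim*, hence in the rim, so `(1, 1) ∉ [λ]` and `λ` is a hook;
self-conjugacy makes it the hook `(m, 1^(m-1))` with `m` its number of rows. Every node of `U_λ`
then lies in the top row, and conversely every top-row node `(0, j)` of the `p`-rim* comes from
`U_λ` (its mirror `(j, 0)` is in `U_λ` only for `j = 0`). So `U_λ` is the top row, `r* = m`, and
`Rim*_p(λ)` is the top row together with the first column, of size `2m - 1`.
-/

open Finset

lemma pRimAux_subset (p : ℕ) : ∀ (fuel : ℕ) (L : List (ℕ × ℕ)), pRimAux p fuel L ⊆ L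
  | 0, _ => by simp [pRimAux]
  | _ + 1, [] => by simp [pRimAux]
  | fuel + 1, c :: L => by
    rw [pRimAux]
    exact List.append_subset.mpr ⟨List.take_subset _ _,
      List.Subset.trans (pRimAux_subset p fuel _)
        (List.Subset.trans (List.filter_subset_self _) (List.drop_subset _ _))⟩

lemma pRimList_subset_rimList (p : ℕ) (f : ℕ → ℕ) : pRimList p f ⊆ rimList f :=
  pRimAux_subset p _ _

lemma lt_and_le_of_mem_rimList {f : ℕ → ℕ} {a b : ℕ} (h : (a, b) ∈ rimList f) :
    b < f a ∧ f (a + 1) ≤ b + 1 := by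
  simp only [rimList, List.mem_flatMap, List.mem_map, List.mem_range, Prod.mk.injEq] at h
  obtain ⟨i, -, k, hk, rfl, rfl⟩ := h
  omega

lemma mem_UList {p : ℕ} {f : ℕ → ℕ} {a b : ℕ} :
    (a, b) ∈ UList p f ↔ (a, b) ∈ pRimList p f ∧ a ≤ b := by
  simp [UList]

lemma mem_rimStar {p : ℕ} {f : ℕ → ℕ} {a b : ℕ} :
    (a, b) ∈ rimStar p f ↔ (a, b) ∈ UList p f ∨ (b, a) ∈ UList p f := by
  simp [rimStar]

namespace IsPartition

variable {f : ℕ → ℕ} (hf : IsPartition f)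
include hf

lemma eq_zero_iff_len_le {i : ℕ} : f i = 0 ↔ len f ≤ i := by
  refine ⟨fun h => Nat.sInf_le h, fun h => ?_⟩
  have hlen : f (len f) = 0 := Nat.sInf_mem hf.2
  exact Nat.eq_zero_of_le_zero (hlen ▸ hf.1 h)

lemma conj_zero : conj f 0 = len f := by
  have : {i | 0 < f i} = ↑(range (len f)) := by
    ext i
    simp [Nat.pos_iff_ne_zero, hf.eq_zero_iff_len_le]
  rw [conj, this, Nat.card_coe_set_eq, Set.ncard_coe_finset, card_range]

lemma eq_hook (h0 : f 0 = len f) (h1 : f 1 ≤ 1) :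
    f = fun i => if i = 0 then len f else if i < len f then 1 else 0 := by
  funext i
  rcases Nat.eq_zero_or_pos i with rfl | hi
  · simp [h0]
  have hzero := hf.eq_zero_iff_len_le (i := i)
  have hanti : f i ≤ f 1 := hf.1 hi
  split_ifs <;> omega

end IsPartition

section CoveringRimStar

variable {p : ℕ} {f : ℕ → ℕ} (hall : ∀ i j : ℕ, j < f i → (i, j) ∈ rimStar p f)
include hall

lemma apply_one_le_one_of_forall_mem_rimStar (h0 : 0 < f 0) : f 1 ≤ 1 := by
  have h00 : (0, 0) ∈ UList p f := by simpa using mem_rimStar.mp (hall 0 0 h0)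
  exact (lt_and_le_of_mem_rimList (pRimList_subset_rimList p f (mem_UList.mp h00).1)).2

lemma UList_toFinset_eq_row (hf : IsPartition f) (h1 : f 1 ≤ 1) :
    (UList p f).toFinset = (range (f 0)).image (Prod.mk 0) := by
  ext ⟨a, b⟩
  simp only [List.mem_toFinset, mem_image, mem_range, Prod.mk.injEq]
  constructor
  · intro h
    obtain ⟨hmem, hab⟩ := mem_UList.mp h
    have hb : b < f a := (lt_and_le_of_mem_rimList (pRimList_subset_rimList p f hmem)).1
    obtain rfl : a = 0 := by
      by_contra ha
      have : f a ≤ f 1 := hf.1 (Nat.one_le_iff_ne_zero.mpr ha)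
      omega
    exact ⟨b, hb, rfl, rfl⟩
  · rintro ⟨j, hj, rfl, rfl⟩
    rcases mem_rimStar.mp (hall 0 j hj) with h | h
    · exact h
    · obtain rfl := Nat.le_zero.mp (mem_UList.mp h).2
      exact h

end CoveringRimStar

lemma card_row_union_column {n : ℕ} (hn : 0 < n) :
    ((range n).image (Prod.mk 0) ∪ ((range n).image (Prod.mk 0)).image Prod.swap).card
      = 2 * n - 1 := by
  have hrow : ((range n).image (Prod.mk 0)).card = n := by
    rw [card_image_of_injective _ (Prod.mk_right_injective 0), card_range]
  have hcol : (((range n).image (Prod.mk 0)).image Prod.swap).card = n := by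
    rw [card_image_of_injective _ Prod.swap_injective, hrow]
  have hcorner : (range n).image (Prod.mk 0) ∩ ((range n).image (Prod.mk 0)).image Prod.swap
      = {(0, 0)} := by
    ext ⟨a, b⟩
    simp only [mem_inter, mem_image, mem_range, exists_exists_and_eq_and, Prod.swap_prod_mk,
      Prod.mk.injEq, mem_singleton]
    constructor
    · rintro ⟨⟨_, _, rfl, rfl⟩, _, _, rfl, rfl⟩
      exact ⟨rfl, rfl⟩
    · rintro ⟨rfl, rfl⟩
      exact ⟨⟨0, hn, rfl, rfl⟩, 0, hn, rfl, rfl⟩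
  have := card_union_add_card_inter ((range n).image (Prod.mk 0))
    (((range n).image (Prod.mk 0)).image Prod.swap)
  rw [hrow, hcol, hcorner, card_singleton] at this
  omega

theorem bgSymb_single_column_general (p : ℕ)
    (f : ℕ → ℕ) (hf : IsPartition f) (hsc : SelfConj f)
    (hne : f ≠ fun _ => 0)
    (hall : ∀ i j : ℕ, j < f i → (i, j) ∈ rimStar p f) :
    (f = fun i => if i = 0 then rStar p f else if i < rStar p f then 1 else 0) ∧
    aStar p f = 2 * rStar p f - 1 ∧ Odd (aStar p f) := by
  have hlen : f 0 = len f := (congrFun hsc 0).symm.trans hf.conj_zero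
  have h0 : 0 < f 0 := by
    refine Nat.pos_of_ne_zero fun h => hne (funext fun i => ?_)
    exact hf.eq_zero_iff_len_le.mpr (by omega)
  have h1 := apply_one_le_one_of_forall_mem_rimStar hall h0
  have hU := UList_toFinset_eq_row hall hf h1
  have hr : rStar p f = f 0 := by
    rw [rStar, hU, card_image_of_injective _ (Prod.mk_right_injective 0), card_range]
  have ha : aStar p f = 2 * f 0 - 1 := by
    rw [aStar, rimStar, hU]
    exact card_row_union_column h0
  refine ⟨?_, by rw [ha, hr], by rw [ha]; exact ⟨f 0 - 1, by omega⟩⟩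
  rw [hr, hlen]
  exact hf.eq_hook hlen h1

/-- If `λ` is a nonempty self-conjugate partition whose `p`-rim* is all of `[λ]`
(equivalently whose BG-symbol has a single column `(a*_0, r*_0)`), then `λ` is the
self-conjugate hook `(r*_0, 1^{r*_0 - 1})`; in particular `a*_0 = 2 r*_0 - 1` is odd. -/
theorem bgSymb_single_column (p : ℕ) (hp : p.Prime) (hodd : Odd p)
    (f : ℕ → ℕ) (hf : IsPartition f) (hsc : SelfConj f)
    (hne : f ≠ fun _ => 0)
    (hall : ∀ i j : ℕ, j < f i → (i, j) ∈ rimStar p f) :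
    (f = fun i => if i = 0 then rStar p f else if i < rStar p f then 1 else 0) ∧
    aStar p f = 2 * rStar p f - 1 ∧ Odd (aStar p f) :=
  bgSymb_single_column_general p f hf hsc hne hall

end Mull
end
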